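/- Let X be a compact metric space and F : X ⇉ X a compact-valued upper semicontinuous robust multifunction (i.e., ChainReach(F,x) = closure(Reach(F,x)) for all x). Then the multifunction x ↦ closure(Reach(F,x)) is upper semicontinuous. -/
import Mathlib


open Metric Set

/-- Lower semicontinuity of a multifunction: the lower pre-image of every open set is open. -/
def LSC {X Y : Type*} [TopologicalSpace X] [TopologicalSpace Y] (F : X → Set Y) : Prop :=
  ∀ V : Set Y, IsOpen V → IsOpen {x | (F x ∩ V).Nonempty}

/-- Upper semicontinuity of a multifunction: the upper pre-image of every open set is open. -/
def USC {X Y : Type*} [TopologicalSpace X] [TopologicalSpace Y] (F : X → Set Y) : Prop :=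
  ∀ V : Set Y, IsOpen V → IsOpen {x | F x ⊆ V}

/-- Image of a set under a multifunction. -/
def img {X Y : Type*} (F : X → Set Y) (S : Set X) : Set Y := ⋃ s ∈ S, F s

/-- n-fold composition of a multifunction, applied to a point. -/
def iter {X : Type*} (F : X → Set X) : ℕ → X → Set X
  | 0, x => {x}
  | n + 1, x => img F (iter F n x)

/-- The reachable set from a point. -/
def reach {X : Type*} (F : X → Set X) (x : X) : Set X := ⋃ n, iter F n x

/-- The δ-perturbed multifunction F_δ(x) = B_δ(F(x)). -/
noncomputable def pert {X : Type*} [PseudoEMetricSpace X] (F : X → Set X) (δ : ℝ) (x : X) :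
    Set X := Metric.thickening δ (F x)

/-- The chain reachable set from a point. -/
noncomputable def chainReach {X : Type*} [PseudoEMetricSpace X] (F : X → Set X) (x : X) :
    Set X := ⋂ ε > (0 : ℝ), reach (pert F ε) x

/-- A set is sub-invariant if F(A) ⊆ A. -/
def SubInv {X : Type*} (F : X → Set X) (A : Set X) : Prop := img F A ⊆ A

/-- A minimal set: nonempty, closed, sub-invariant, and minimal among such sets. -/
def MinimalSet {X : Type*} [TopologicalSpace X] (F : X → Set X) (A : Set X) : Prop :=
  A.Nonempty ∧ IsClosed A ∧ SubInv F A ∧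
    ∀ B ⊆ A, B.Nonempty → IsClosed B → SubInv F B → B = A

/-- Lyapunov stability of a set. -/
def LyapStable {X : Type*} [TopologicalSpace X] (F : X → Set X) (A : Set X) : Prop :=
  ∀ V : Set X, IsOpen V → A ⊆ V → ∃ W : Set X, IsOpen W ∧ A ⊆ W ∧ img (reach F) W ⊆ V


lemma img_mono'' {X Y : Type*} {G H : X → Set Y} {S T : Set X} (hGH : ∀ w, G w ⊆ H w)
    (hST : S ⊆ T) : img G S ⊆ img H T := by
  intro z hz
  rcases mem_iUnion₂.1 hz with ⟨w, hw, hzw⟩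
  exact mem_iUnion₂.2 ⟨w, hST hw, hGH w hzw⟩

lemma iter_mono'' {X : Type*} {G H : X → Set X} (h : ∀ w, G w ⊆ H w) (n : ℕ) (x : X) :
    iter G n x ⊆ iter H n x := by
  induction n with
  | zero => exact subset_rfl
  | succ n ih => exact img_mono'' h ih

lemma reach_mono'' {X : Type*} {G H : X → Set X} (h : ∀ w, G w ⊆ H w) (x : X) :
    reach G x ⊆ reach H x := iUnion_mono fun n => iter_mono'' h n x

lemma mem_reach_self'' {X : Type*} (G : X → Set X) (x : X) : x ∈ reach G x :=
  mem_iUnion.2 ⟨0, rfl⟩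

lemma pert_mono'' {X : Type*} [PseudoEMetricSpace X] (F : X → Set X) {δ ε : ℝ} (h : δ ≤ ε)
    (w : X) : pert F δ w ⊆ pert F ε w := thickening_mono h _

lemma chain_transfer'' {X : Type*} [MetricSpace X] (F : X → Set X) (husc : USC F)
    (x : X) {ε : ℝ} (hε : 0 < ε) :
    ∃ δ : ℝ, 0 < δ ∧ δ ≤ ε ∧ ∀ y, dist y x < δ →
      reach (pert F δ) y ⊆ {y} ∪ reach (pert F ε) x := by
  have hU : IsOpen {y | F y ⊆ thickening (ε/2) (F x)} := husc _ isOpen_thickening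
  have hxU : x ∈ {y | F y ⊆ thickening (ε/2) (F x)} :=
    self_subset_thickening (half_pos hε) _
  rcases Metric.isOpen_iff.1 hU x hxU with ⟨r, hr, hball⟩
  refine ⟨min r (ε/2), lt_min hr (half_pos hε),
    (min_le_right _ _).trans (half_le_self hε.le), ?_⟩
  set δ := min r (ε/2) with hδdef
  have hδr : δ ≤ r := min_le_left _ _
  have hδε2 : δ ≤ ε/2 := min_le_right _ _
  have hδε : δ ≤ ε := hδε2.trans (half_le_self hε.le)
  intro y hy z hz
  have hyU : F y ⊆ thickening (ε/2) (F x) := hball (lt_of_lt_of_le hy hδr)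
  have key : ∀ k, iter (pert F δ) (k+1) y ⊆ iter (pert F ε) (k+1) x := by
    intro k
    induction k with
    | zero =>
      intro z hz
      rcases mem_iUnion₂.1 hz with ⟨w, hw, hzw⟩
      have hwy : w = y := hw
      subst hwy
      have h1 : z ∈ thickening (δ + ε/2) (F x) :=
        thickening_thickening_subset δ (ε/2) (F x)
          (thickening_subset_of_subset δ hyU hzw)
      have h2 : z ∈ pert F ε x := thickening_mono (by linarith) _ h1
      exact mem_iUnion₂.2 ⟨x, rfl, h2⟩
    | succ k ih => exact img_mono'' (pert_mono'' F hδε) ih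
  rcases mem_iUnion.1 hz with ⟨n, hzn⟩
  match n, hzn with
  | 0, hzn => exact Or.inl hzn
  | n+1, hzn => exact Or.inr (mem_iUnion.2 ⟨n+1, key n hzn⟩)

lemma closure_reach_subset'' {X : Type*} [MetricSpace X] (F : X → Set X) {δ : ℝ} (hδ : 0 < δ)
    (x : X) : closure (reach (pert F δ) x) ⊆ reach (pert F (2*δ)) x ∪ closedBall x δ := by
  intro z hz
  rcases Metric.mem_closure_iff.1 hz δ hδ with ⟨z', hz', hd⟩
  rcases mem_iUnion.1 hz' with ⟨n, hzn⟩
  match n, hzn with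
  | 0, hzn =>
    have : z' = x := hzn
    exact Or.inr (mem_closedBall.2 (by rw [← this]; exact hd.le))
  | n+1, hzn =>
    left
    rcases mem_iUnion₂.1 hzn with ⟨w, hw, hzw⟩
    rcases Metric.mem_thickening_iff.1 hzw with ⟨p, hp, hdp⟩
    refine mem_iUnion.2 ⟨n+1, mem_iUnion₂.2 ⟨w,
      iter_mono'' (pert_mono'' F (by linarith)) n x hw, ?_⟩⟩
    exact Metric.mem_thickening_iff.2 ⟨p, hp, by have := dist_triangle z z' p; linarith⟩

theorem stmt18 {X : Type*} [MetricSpace X] [CompactSpace X] (F : X → Set X)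
    (hne : ∀ x, (F x).Nonempty) (hcomp : ∀ x, IsCompact (F x)) (husc : USC F)
    (hrobust : ∀ x, chainReach F x = closure (reach F x)) :
    USC (fun x => closure (reach F x)) := by
  intro V hV
  rw [isOpen_iff_forall_mem_open]
  intro x hx
  simp only [mem_setOf_eq] at hx
  -- the decreasing family of closures of perturbed reach sets
  set Z : ℕ → Set X := fun n => closure (reach (pert F (1/(n+1 : ℝ))) x) with hZdef
  have hZc : ∀ n, IsClosed (Z n) := fun n => isClosed_closure
  have hZanti : ∀ m n, m ≤ n → Z n ⊆ Z m := by
    intro m n h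
    apply closure_mono
    refine reach_mono'' (pert_mono'' F ?_) x
    have h1 : (0:ℝ) < (m:ℝ) + 1 := by positivity
    exact one_div_le_one_div_of_le h1 (by exact_mod_cast Nat.add_le_add_right h 1)
  have hxV : x ∈ V := hx (subset_closure (mem_reach_self'' F x))
  have hinter : Vᶜ ∩ ⋂ n, Z n = ∅ := by
    rw [eq_empty_iff_forall_notMem]
    rintro z ⟨hzV, hzZ⟩
    apply hzV
    by_cases hzx : z = x
    · subst hzx; exact hxV
    · have hzc : z ∈ chainReach F x := by
        refine mem_iInter₂.2 fun ε hε => ?_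
        obtain ⟨n, hn⟩ := exists_nat_one_div_lt (lt_min (half_pos hε) (dist_pos.2 hzx))
        have h1 : (1:ℝ)/(n+1) < ε/2 := hn.trans_le (min_le_left _ _)
        have h2 : (1:ℝ)/(n+1) < dist z x := hn.trans_le (min_le_right _ _)
        have hδpos : (0:ℝ) < 1/(n+1) := by positivity
        have hz' := closure_reach_subset'' F hδpos x (mem_iInter.1 hzZ n)
        rcases hz' with h | h
        · exact reach_mono'' (pert_mono'' F (by linarith)) x h
        · exact absurd (mem_closedBall.1 h) (not_le.2 h2)
      rw [hrobust] at hzc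
      exact hx hzc
  have hKcomp : IsCompact (Vᶜ) := hV.isClosed_compl.isCompact
  obtain ⟨n₀, hn₀⟩ := hKcomp.elim_directed_family_closed Z hZc hinter
    (fun m n => ⟨max m n, hZanti m _ (le_max_left _ _), hZanti n _ (le_max_right _ _)⟩)
  have hZV : Z n₀ ⊆ V := by
    intro z hz
    by_contra hzV
    exact absurd hn₀ (Set.nonempty_iff_ne_empty.1 ⟨z, hzV, hz⟩)
  have hε₀pos : (0:ℝ) < 1/(n₀+1) := by positivity
  obtain ⟨δ, hδpos, hδle, hδ⟩ := chain_transfer'' F husc x hε₀pos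
  refine ⟨ball x δ ∩ V, ?_, isOpen_ball.inter hV, mem_ball_self hδpos, hxV⟩
  rintro y ⟨hyb, hyV⟩
  simp only [mem_setOf_eq]
  have hsub : reach F y ⊆ {y} ∪ reach (pert F (1/(n₀+1 : ℝ))) x := by
    refine (reach_mono'' (fun w => self_subset_thickening hδpos (F w)) y).trans
      (hδ y (mem_ball.1 hyb))
  calc closure (reach F y)
      ⊆ closure ({y} ∪ reach (pert F (1/(n₀+1 : ℝ))) x) := closure_mono hsub
    _ = {y} ∪ Z n₀ := by rw [closure_union, closure_singleton]
    _ ⊆ V := union_subset (singleton_subset_iff.2 hyV) hZV
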